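/- arXiv:1202.0803 — 2 statements merged into one kernel-verified Lean document; each statement's English description precedes it below -/
import Mathlib

section
/- For every bounded measurable f : Ω → ℝ one has (∫_Ω V(ω) f(ω) d𝒫(ω))² ≤ 2 C_u · ∫_Ω f(ω)(−Lf)(ω) d𝒫(ω), i.e. the local drift V belongs to the space H_{−1} associated with the Dirichlet form of L. (Lemma 2.5 of the paper.) -/
open MeasureTheory

/-- The unit vectors of `ℤ^d`, indexed by a coordinate and a sign. -/
def unitVec (d : ℕ) (p : Fin d × Bool) : Fin d → ℤ :=
  Pi.single p.1 (if p.2 then 1 else -1)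

/-- The spatial part of the generator of the environment seen from the particle:
`Lf(ω) = ∑_{|y|=1} a_y(ω) (f(τ_y ω) − f(ω))`. -/
def genL {Ω : Type*} (d : ℕ) (τ : (Fin d → ℤ) → Ω → Ω)
    (a : (Fin d → ℤ) → Ω → ℝ) (f : Ω → ℝ) (ω : Ω) : ℝ :=
  ∑ p : Fin d × Bool, a (unitVec d p) ω * (f (τ (unitVec d p) ω) - f ω)

/-!
Reflecting a bond through the measure-preserving shift `τ_y` turns the term of direction `-y`
into the term of direction `y` seen from the other endpoint. Applied to `⟨f, -Lf⟩` this gives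
the Dirichlet form `∑ᵢ ∫ a_{eᵢ} (f ∘ τ_{eᵢ} - f)²`; applied to `∫ V f` it gives
`-∫ a_e (f ∘ τ_e - f)`. Cauchy–Schwarz with the weight `a_e`, whose mass is at most `C_u`,
then bounds `(∫ V f)²` by `C_u` times a single term of the Dirichlet form.
-/

open scoped ENNReal

section WeightedCauchySchwarz

variable {Ω : Type*} [MeasurableSpace Ω] {μ : Measure Ω}

theorem MeasureTheory.MemLp.integrable_mul_of_top [IsFiniteMeasure μ] {w g : Ω → ℝ}
    (hw : MemLp w ∞ μ) (hg : MemLp g ∞ μ) : Integrable (fun ω => w ω * g ω) μ :=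
  (hg.mul' hw).integrable le_top

/-- The quadratic `t ↦ ∫ w (t g + 1)²` is nonnegative, so its discriminant is nonpositive. -/
theorem sq_integral_mul_le_integral_mul_integral_mul_sq {w g : Ω → ℝ} (hw : ∀ ω, 0 ≤ w ω)
    (hw_int : Integrable w μ) (hwg : Integrable (fun ω => w ω * g ω) μ)
    (hwg2 : Integrable (fun ω => w ω * g ω ^ 2) μ) :
    (∫ ω, w ω * g ω ∂μ) ^ 2 ≤ (∫ ω, w ω ∂μ) * ∫ ω, w ω * g ω ^ 2 ∂μ := by
  have hquad : ∀ t : ℝ, 0 ≤ (∫ ω, w ω * g ω ^ 2 ∂μ) * (t * t)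
      + (2 * ∫ ω, w ω * g ω ∂μ) * t + ∫ ω, w ω ∂μ := by
    intro t
    have hexpand : ∫ ω, w ω * (t * g ω + 1) ^ 2 ∂μ
        = (∫ ω, w ω * g ω ^ 2 ∂μ) * (t * t) + (2 * ∫ ω, w ω * g ω ∂μ) * t + ∫ ω, w ω ∂μ := by
      have hsplit : (fun ω => w ω * (t * g ω + 1) ^ 2)
          = fun ω => (t * t) * (w ω * g ω ^ 2) + (2 * t) * (w ω * g ω) + w ω := by
        funext ω; ring
      have hint2 := hwg2.const_mul (t * t)
      have hint1 := hwg.const_mul (2 * t)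
      have hint21 : Integrable (fun ω => t * t * (w ω * g ω ^ 2) + 2 * t * (w ω * g ω)) μ :=
        hint2.add hint1
      rw [hsplit, integral_add hint21 hw_int, integral_add hint2 hint1,
        integral_const_mul, integral_const_mul]
      ring
    exact hexpand ▸ integral_nonneg fun ω => mul_nonneg (hw ω) (sq_nonneg _)
  have hdisc := discrim_le_zero hquad
  rw [discrim] at hdisc
  nlinarith

theorem sq_integral_mul_le_mul_integral_mul_sq [IsProbabilityMeasure μ] {w g : Ω → ℝ} {C : ℝ}
    (hw_nonneg : ∀ ω, 0 ≤ w ω) (hw_le : ∀ ω, w ω ≤ C) (hw : MemLp w ∞ μ) (hg : MemLp g ∞ μ) :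
    (∫ ω, w ω * g ω ∂μ) ^ 2 ≤ C * ∫ ω, w ω * g ω ^ 2 ∂μ := by
  have hmass : ∫ ω, w ω ∂μ ≤ C := by
    simpa using integral_mono (hw.integrable le_top) (integrable_const C) hw_le
  calc (∫ ω, w ω * g ω ∂μ) ^ 2 ≤ (∫ ω, w ω ∂μ) * ∫ ω, w ω * g ω ^ 2 ∂μ :=
        sq_integral_mul_le_integral_mul_integral_mul_sq hw_nonneg (hw.integrable le_top)
          (hw.integrable_mul_of_top hg)
          (by simpa only [sq] using hw.integrable_mul_of_top (hg.mul' hg))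
    _ ≤ C * ∫ ω, w ω * g ω ^ 2 ∂μ :=
        mul_le_mul_of_nonneg_right hmass
          (integral_nonneg fun ω => mul_nonneg (hw_nonneg ω) (sq_nonneg _))

end WeightedCauchySchwarz
section Shift

variable {G Ω : Type*} [AddGroup G] {τ : G → Ω → Ω}

theorem shift_neg_apply_shift (hτ_add : ∀ x y, τ (x + y) = τ x ∘ τ y) (hτ_zero : τ 0 = id)
    (y : G) (ω : Ω) : τ (-y) (τ y ω) = ω := by
  simpa [hτ_zero] using (congrFun (hτ_add (-y) y) ω).symm

variable [MeasurableSpace Ω] {μ : Measure Ω}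

theorem integral_comp_shift (hτ_add : ∀ x y, τ (x + y) = τ x ∘ τ y) (hτ_zero : τ 0 = id)
    (hτ_mp : ∀ x, MeasurePreserving (τ x) μ μ) (y : G) (g : Ω → ℝ) :
    ∫ ω, g (τ y ω) ∂μ = ∫ ω, g ω ∂μ := by
  have hemb : MeasurableEmbedding (τ y) :=
    MeasurableEquiv.measurableEmbedding
      { toFun := τ y
        invFun := τ (-y)
        left_inv := shift_neg_apply_shift hτ_add hτ_zero y
        right_inv := fun ω => by simpa using shift_neg_apply_shift hτ_add hτ_zero (-y) ω
        measurable_toFun := (hτ_mp y).measurable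
        measurable_invFun := (hτ_mp (-y)).measurable }
  exact (hτ_mp y).integral_comp hemb g

theorem integral_mul_comp_shift_neg (hτ_add : ∀ x y, τ (x + y) = τ x ∘ τ y) (hτ_zero : τ 0 = id)
    (hτ_mp : ∀ x, MeasurePreserving (τ x) μ μ) {w w' : Ω → ℝ} {y : G}
    (hw' : ∀ ω, w' ω = w (τ (-y) ω)) (F : Ω → Ω → ℝ) :
    ∫ ω, w' ω * F ω (τ (-y) ω) ∂μ = ∫ ω, w ω * F (τ y ω) ω ∂μ := by
  rw [← integral_comp_shift hτ_add hτ_zero hτ_mp y]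
  simp only [hw', shift_neg_apply_shift hτ_add hτ_zero]

variable [IsFiniteMeasure μ]

theorem integral_dirichlet_pair (hτ_add : ∀ x y, τ (x + y) = τ x ∘ τ y) (hτ_zero : τ 0 = id)
    (hτ_mp : ∀ x, MeasurePreserving (τ x) μ μ) {w w' f : Ω → ℝ} {y : G}
    (hw' : ∀ ω, w' ω = w (τ (-y) ω)) (hw : MemLp w ∞ μ) (hf : MemLp f ∞ μ) :
    ∫ ω, w ω * (f ω * (f ω - f (τ y ω))) ∂μ + ∫ ω, w' ω * (f ω * (f ω - f (τ (-y) ω))) ∂μ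
      = ∫ ω, w ω * (f (τ y ω) - f ω) ^ 2 ∂μ := by
  have hfτ : MemLp (fun ω => f (τ y ω)) ∞ μ := hf.comp_measurePreserving (hτ_mp y)
  have hint : Integrable (fun ω => w ω * (f ω * (f ω - f (τ y ω)))) μ :=
    hw.integrable_mul_of_top ((hf.sub hfτ).mul' hf)
  have hint' : Integrable (fun ω => w ω * (f (τ y ω) * (f (τ y ω) - f ω))) μ :=
    hw.integrable_mul_of_top ((hfτ.sub hf).mul' hfτ)
  rw [integral_mul_comp_shift_neg hτ_add hτ_zero hτ_mp hw' (fun u v => f u * (f u - f v)),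
    ← integral_add hint hint']
  congr 1 with ω
  ring

theorem integral_sub_comp_shift_neg_mul (hτ_add : ∀ x y, τ (x + y) = τ x ∘ τ y)
    (hτ_zero : τ 0 = id) (hτ_mp : ∀ x, MeasurePreserving (τ x) μ μ) {w w' f : Ω → ℝ} {y : G}
    (hw' : ∀ ω, w' ω = w (τ (-y) ω)) (hw : MemLp w ∞ μ) (hf : MemLp f ∞ μ) :
    ∫ ω, (w ω - w' ω) * f ω ∂μ = -∫ ω, w ω * (f (τ y ω) - f ω) ∂μ := by
  have hfτ : MemLp (fun ω => f (τ y ω)) ∞ μ := hf.comp_measurePreserving (hτ_mp y)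
  have hw'_mem : MemLp w' ∞ μ := by
    rw [show w' = w ∘ τ (-y) from funext hw']
    exact hw.comp_measurePreserving (hτ_mp (-y))
  simp only [sub_mul]
  rw [integral_sub (hw.integrable_mul_of_top hf) (hw'_mem.integrable_mul_of_top hf),
    integral_mul_comp_shift_neg hτ_add hτ_zero hτ_mp hw' (fun u _ => f u),
    ← integral_sub (hw.integrable_mul_of_top hf) (hw.integrable_mul_of_top hfτ), ← integral_neg]
  congr 1 with ω
  ring

end Shift

section RandomConductances

variable {d : ℕ}

theorem unitVec_false (i : Fin d) : unitVec d (i, false) = -Pi.single i 1 :=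
  Pi.single_neg i 1

theorem sum_abs_unitVec (p : Fin d × Bool) : ∑ i, |unitVec d p i| = 1 := by
  rcases p with ⟨k, _ | _⟩ <;> simp [unitVec, Pi.single_apply, apply_ite]

variable {Ω : Type*} [MeasurableSpace Ω] {μ : Measure Ω} [IsFiniteMeasure μ]
  {τ : (Fin d → ℤ) → Ω → Ω} {a : (Fin d → ℤ) → Ω → ℝ}

theorem integral_mul_neg_genL (hτ_add : ∀ x y, τ (x + y) = τ x ∘ τ y) (hτ_zero : τ 0 = id)
    (hτ_mp : ∀ x, MeasurePreserving (τ x) μ μ) (ha : ∀ p, MemLp (a (unitVec d p)) ∞ μ)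
    (ha_cov : ∀ i ω, a (-Pi.single i 1) ω = a (Pi.single i 1) (τ (-Pi.single i 1) ω))
    {f : Ω → ℝ} (hf : MemLp f ∞ μ) :
    ∫ ω, f ω * -genL d τ a f ω ∂μ
      = ∑ i, ∫ ω, a (Pi.single i 1) ω * (f (τ (Pi.single i 1) ω) - f ω) ^ 2 ∂μ := by
  have hpoint : ∀ ω, f ω * -genL d τ a f ω
      = ∑ p, a (unitVec d p) ω * (f ω * (f ω - f (τ (unitVec d p) ω))) := by
    intro ω
    rw [genL, mul_neg, Finset.mul_sum, ← Finset.sum_neg_distrib]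
    congr 1 with p
    ring
  have hint : ∀ p, Integrable
      (fun ω => a (unitVec d p) ω * (f ω * (f ω - f (τ (unitVec d p) ω)))) μ := fun p =>
    (ha p).integrable_mul_of_top ((hf.sub (hf.comp_measurePreserving (hτ_mp _))).mul' hf)
  rw [integral_congr_ae (ae_of_all _ hpoint), integral_finsetSum _ fun p _ => hint p,
    Fintype.sum_prod_type]
  refine Finset.sum_congr rfl fun i _ => ?_
  rw [Fintype.sum_bool, unitVec_false]
  exact integral_dirichlet_pair hτ_add hτ_zero hτ_mp (ha_cov i) (ha (i, true)) hf

end RandomConductances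

theorem stmt4_general
    (d : ℕ)
    {Ω : Type*} [MeasurableSpace Ω] (μ : Measure Ω) [IsProbabilityMeasure μ]
    (τ : (Fin d → ℤ) → Ω → Ω)
    (hτ_add : ∀ x y, τ (x + y) = τ x ∘ τ y) (hτ_zero : τ 0 = id)
    (hτ_mp : ∀ x, MeasurePreserving (τ x) μ μ)
    (Cl Cu : ℝ) (hCl : 0 < Cl) (hClCu : Cl ≤ Cu)
    (a : (Fin d → ℤ) → Ω → ℝ)
    (ha_meas : ∀ y : Fin d → ℤ, (∑ i, |y i|) = 1 → Measurable (a y))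
    (ha_lb : ∀ y : Fin d → ℤ, (∑ i, |y i|) = 1 → ∀ ω, Cl ≤ a y ω)
    (ha_ub : ∀ y : Fin d → ℤ, (∑ i, |y i|) = 1 → ∀ ω, a y ω ≤ Cu)
    (ha_cov : ∀ y : Fin d → ℤ, (∑ i, |y i|) = 1 → ∀ ω, a (-y) ω = a y (τ (-y) ω))
    (j : Fin d)
    (f : Ω → ℝ) (hf_meas : Measurable f) (hf_bdd : ∃ M, ∀ ω, |f ω| ≤ M) :
    (∫ ω, (a (Pi.single j 1) ω - a (-Pi.single j 1) ω) * f ω ∂μ) ^ 2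
      ≤ 2 * Cu * ∫ ω, f ω * (-(genL d τ a f ω)) ∂μ := by
  have ha_nonneg : ∀ p ω, 0 ≤ a (unitVec d p) ω := fun p ω =>
    hCl.le.trans (ha_lb _ (sum_abs_unitVec p) ω)
  have ha_mem : ∀ p, MemLp (a (unitVec d p)) ∞ μ := fun p =>
    memLp_top_of_bound (ha_meas _ (sum_abs_unitVec p)).aestronglyMeasurable Cu <|
      ae_of_all _ fun ω => (Real.norm_of_nonneg (ha_nonneg p ω)).trans_le <|
        ha_ub _ (sum_abs_unitVec p) ω
  obtain ⟨M, hM⟩ := hf_bdd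
  have hf : MemLp f ∞ μ := memLp_top_of_bound hf_meas.aestronglyMeasurable M (ae_of_all _ hM)
  have ha_cov' : ∀ i ω, a (-Pi.single i 1) ω = a (Pi.single i 1) (τ (-Pi.single i 1) ω) :=
    fun i => ha_cov _ (sum_abs_unitVec (i, true))
  have hterm_nonneg : ∀ i, 0 ≤ ∫ ω, a (Pi.single i 1) ω * (f (τ (Pi.single i 1) ω) - f ω) ^ 2 ∂μ :=
    fun i => integral_nonneg fun ω => mul_nonneg (ha_nonneg (i, true) ω) (sq_nonneg _)
  have hterm_le : ∫ ω, a (Pi.single j 1) ω * (f (τ (Pi.single j 1) ω) - f ω) ^ 2 ∂μ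
      ≤ ∫ ω, f ω * (-(genL d τ a f ω)) ∂μ := by
    rw [integral_mul_neg_genL hτ_add hτ_zero hτ_mp ha_mem ha_cov' hf]
    exact Finset.single_le_sum (fun i _ => hterm_nonneg i) (Finset.mem_univ j)
  rw [integral_sub_comp_shift_neg_mul hτ_add hτ_zero hτ_mp (ha_cov' j) (ha_mem (j, true)) hf,
    neg_sq]
  calc _ ≤ Cu * ∫ ω, a (Pi.single j 1) ω * (f (τ (Pi.single j 1) ω) - f ω) ^ 2 ∂μ :=
        sq_integral_mul_le_mul_integral_mul_sq (ha_nonneg (j, true))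
          (ha_ub _ (sum_abs_unitVec (j, true))) (ha_mem (j, true))
          ((hf.comp_measurePreserving (hτ_mp _)).sub hf)
    _ ≤ Cu * ∫ ω, f ω * (-(genL d τ a f ω)) ∂μ :=
        mul_le_mul_of_nonneg_left hterm_le (hCl.le.trans hClCu)
    _ ≤ 2 * Cu * ∫ ω, f ω * (-(genL d τ a f ω)) ∂μ := by
        nlinarith [hCl.trans_le hClCu, (hterm_nonneg j).trans hterm_le]

/-- Lemma 2.5: `(∫ V f d𝒫)² ≤ 2 C_u ⟨f, (−L) f⟩`, i.e. the local drift `V = a_e − a_{−e}`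
belongs to `H_{−1}`. -/
theorem stmt4
    (d : ℕ) (hd : 1 ≤ d)
    {Ω : Type*} [MeasurableSpace Ω] (μ : Measure Ω) [IsProbabilityMeasure μ]
    (τ : (Fin d → ℤ) → Ω → Ω)
    (hτ_add : ∀ x y, τ (x + y) = τ x ∘ τ y) (hτ_zero : τ 0 = id)
    (hτ_mp : ∀ x, MeasurePreserving (τ x) μ μ)
    (Cl Cu : ℝ) (hCl : 0 < Cl) (hClCu : Cl ≤ Cu)
    (a : (Fin d → ℤ) → Ω → ℝ)
    (ha_meas : ∀ y : Fin d → ℤ, (∑ i, |y i|) = 1 → Measurable (a y))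
    (ha_lb : ∀ y : Fin d → ℤ, (∑ i, |y i|) = 1 → ∀ ω, Cl ≤ a y ω)
    (ha_ub : ∀ y : Fin d → ℤ, (∑ i, |y i|) = 1 → ∀ ω, a y ω ≤ Cu)
    (ha_cov : ∀ y : Fin d → ℤ, (∑ i, |y i|) = 1 → ∀ ω, a (-y) ω = a y (τ (-y) ω))
    (j : Fin d)
    (f : Ω → ℝ) (hf_meas : Measurable f) (hf_bdd : ∃ M, ∀ ω, |f ω| ≤ M) :
    (∫ ω, (a (Pi.single j 1) ω - a (-Pi.single j 1) ω) * f ω ∂μ) ^ 2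
      ≤ 2 * Cu * ∫ ω, f ω * (-(genL d τ a f ω)) ∂μ :=
  stmt4_general d μ τ hτ_add hτ_zero hτ_mp Cl Cu hCl hClCu a ha_meas ha_lb ha_ub ha_cov j f hf_meas
    hf_bdd
end

section
/- Let H be a real inner product space, A : H → H a linear map, V ∈ H, and λ, λ' > 0. If u, u' ∈ H satisfy λu − Au = V and λ'u' − Au' = V, then ⟨u − u', −A(u − u')⟩ ≤ ((√λ + √λ')² / 2) · (‖u‖² + ‖u'‖²). (Inequality (3.2) in the proof of Proposition 3.1 of the paper, bounding the H₁-norm of differences of resolvents.) -/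
open scoped InnerProductSpace

/-! Subtracting the two resolvent equations gives `A (u - u') = λ u - λ' u'`, so the left-hand
side equals `(λ + λ') ⟪u, u'⟫ - λ ‖u‖² - λ' ‖u'‖²`. Dropping the negative terms and using
`⟪u, u'⟫ ≤ (‖u‖² + ‖u'‖²) / 2` bounds it by `(λ + λ') / 2 (‖u‖² + ‖u'‖²)`, and
`λ + λ' ≤ (√λ + √λ')²`. -/

theorem LinearMap.map_sub_eq_of_sub_map_eq {H : Type*} [AddCommGroup H] [Module ℝ H]
    (A : H →ₗ[ℝ] H) {V u u' : H} {lam lam' : ℝ}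
    (hu : lam • u - A u = V) (hu' : lam' • u' - A u' = V) :
    A (u - u') = lam • u - lam' • u' := by
  rw [map_sub]
  linear_combination (norm := module) hu' - hu

theorem real_inner_sub_neg_smul_sub_le {H : Type*} [NormedAddCommGroup H] [InnerProductSpace ℝ H]
    (u u' : H) {lam lam' : ℝ} (hlam : 0 ≤ lam) (hlam' : 0 ≤ lam') :
    ⟪u - u', -(lam • u - lam' • u')⟫_ℝ ≤ (lam + lam') / 2 * (‖u‖ ^ 2 + ‖u'‖ ^ 2) := by
  have hexpand : ⟪u - u', -(lam • u - lam' • u')⟫_ℝ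
      = (lam + lam') * ⟪u, u'⟫_ℝ - lam * ‖u‖ ^ 2 - lam' * ‖u'‖ ^ 2 := by
    simp only [inner_neg_right, inner_sub_left, inner_sub_right, real_inner_smul_right,
      real_inner_self_eq_norm_sq, real_inner_comm u u']
    ring
  have hcross : ⟪u, u'⟫_ℝ ≤ (‖u‖ ^ 2 + ‖u'‖ ^ 2) / 2 := by
    nlinarith [real_inner_le_norm u u', sq_nonneg (‖u‖ - ‖u'‖)]
  rw [hexpand]
  nlinarith [mul_le_mul_of_nonneg_left hcross (add_nonneg hlam hlam'),
    mul_nonneg hlam (sq_nonneg ‖u‖), mul_nonneg hlam' (sq_nonneg ‖u'‖)]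

theorem Real.add_le_sqrt_add_sqrt_sq {a b : ℝ} (ha : 0 ≤ a) (hb : 0 ≤ b) :
    a + b ≤ (Real.sqrt a + Real.sqrt b) ^ 2 := by
  nlinarith [Real.sq_sqrt ha, Real.sq_sqrt hb, Real.sqrt_nonneg a, Real.sqrt_nonneg b]

/-- Inequality (3.2) in the proof of Proposition 3.1: if `u, u'` solve the resolvent
equations `λu − Au = V` and `λ'u' − Au' = V`, then
`⟨u − u', −A(u − u')⟩ ≤ ((√λ + √λ')²/2) (‖u‖² + ‖u'‖²)`. -/
theorem stmt10 {H : Type*} [NormedAddCommGroup H] [InnerProductSpace ℝ H]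
    (A : H →ₗ[ℝ] H) (V u u' : H) (lam lam' : ℝ) (hlam : 0 < lam) (hlam' : 0 < lam')
    (hu : lam • u - A u = V) (hu' : lam' • u' - A u' = V) :
    ⟪u - u', -(A (u - u'))⟫_ℝ
      ≤ (Real.sqrt lam + Real.sqrt lam') ^ 2 / 2 * (‖u‖ ^ 2 + ‖u'‖ ^ 2) := by
  rw [A.map_sub_eq_of_sub_map_eq hu hu']
  calc ⟪u - u', -(lam • u - lam' • u')⟫_ℝ
      ≤ (lam + lam') / 2 * (‖u‖ ^ 2 + ‖u'‖ ^ 2) :=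
        real_inner_sub_neg_smul_sub_le u u' hlam.le hlam'.le
    _ ≤ (Real.sqrt lam + Real.sqrt lam') ^ 2 / 2 * (‖u‖ ^ 2 + ‖u'‖ ^ 2) := by
        gcongr
        exact Real.add_le_sqrt_add_sqrt_sq hlam.le hlam'.le
end
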